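/- Let G be a graph, let P = v_0 v_1 ⋯ v_l be a path in G with deg(v_0) = 1, let 0 ≤ r < s with r + s ≤ l − 1 and deg(v_i) = 2 for 0 < i < (r+s)/2, and set v = v_r, u = v_s, a = ⌊(r+s)/2⌋. Then for every vertex w of G not in {v_0, v_1, …, v_a} and every k ≥ 0, |SW_k(G; w, v)| ≤ |SW_k(G; w, u)|. -/
import Mathlib


open scoped BigOperators

universe u

/-- The signless Laplacian matrix `Q = D + A` of a graph. -/
noncomputable def signLap {V : Type u} [Fintype V] (G : SimpleGraph V) :
    Matrix V V ℝ :=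
  letI := Classical.decEq V
  letI : DecidableRel G.Adj := Classical.decRel _
  Matrix.diagonal (fun i => (G.degree i : ℝ)) + G.adjMatrix ℝ

lemma signLap_isHermitian {V : Type u} [Fintype V] (G : SimpleGraph V) :
    (signLap G).IsHermitian := by
  classical
  unfold signLap
  ext i j
  simp [Matrix.conjTranspose_apply, Matrix.add_apply, Matrix.diagonal_apply,
    SimpleGraph.adjMatrix_apply, SimpleGraph.adj_comm]
  split_ifs with h h' h' <;> simp_all [SimpleGraph.adj_comm, eq_comm] <;> subst h' <;> rfl

/-- Eigenvalues of the signless Laplacian. -/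
noncomputable def signLapEig {V : Type u} [Fintype V] (G : SimpleGraph V) : V → ℝ :=
  letI := Classical.decEq V
  (signLap_isHermitian G).eigenvalues

/-- The signless Laplacian Estrada index. -/
noncomputable def SLEE {V : Type u} [Fintype V] (G : SimpleGraph V) : ℝ :=
  ∑ i, Real.exp (signLapEig G i)

/-- The `k`-th signless Laplacian spectral moment. -/
noncomputable def specMoment {V : Type u} [Fintype V] (G : SimpleGraph V) (k : ℕ) : ℝ :=
  ∑ i, (signLapEig G i) ^ k

/-- The number of semi-edge walks of length `k` in `G` from `x` to `y`. -/
noncomputable def swCount {V : Type u} (G : SimpleGraph V) (k : ℕ) (x y : V) : ℕ :=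
  Nat.card { p : (Fin (k + 1) → V) × (Fin k → Sym2 V) //
    (∀ i : Fin k, p.2 i ∈ G.edgeSet ∧ p.1 i.castSucc ∈ p.2 i ∧ p.1 i.succ ∈ p.2 i) ∧
    p.1 0 = x ∧ p.1 (Fin.last k) = y }

/-- A unicyclic graph: connected with as many edges as vertices. -/
def IsUnicyclic {V : Type u} [Fintype V] (G : SimpleGraph V) : Prop :=
  G.Connected ∧ Nat.card G.edgeSet = Fintype.card V

/-- The cycle graph on `Fin q`. -/
def cycleGraph' (q : ℕ) : SimpleGraph (Fin q) :=
  SimpleGraph.fromRel (fun i j => (i.val + 1) % q = j.val)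

/-- `C_q S(n₁,…,n_q)` : the cycle `C_q` with `n i` pendent vertices attached to vertex `i`. -/
def CqS (q : ℕ) (n : Fin q → ℕ) : SimpleGraph (Fin q ⊕ Σ i : Fin q, Fin (n i)) :=
  SimpleGraph.fromRel (fun x y =>
    (∃ i j : Fin q, x = Sum.inl i ∧ y = Sum.inl j ∧ (i.val + 1) % q = j.val) ∨
    (∃ (i : Fin q) (p : Fin (n i)), x = Sum.inl i ∧ y = Sum.inr ⟨i, p⟩))

/-- `C_q P(n₁,…,n_q)` : the cycle `C_q` with a pendent path on `n i + 1` vertices at vertex `i`. -/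
def CqP (q : ℕ) (n : Fin q → ℕ) : SimpleGraph (Fin q ⊕ Σ i : Fin q, Fin (n i)) :=
  SimpleGraph.fromRel (fun x y =>
    (∃ i j : Fin q, x = Sum.inl i ∧ y = Sum.inl j ∧ (i.val + 1) % q = j.val) ∨
    (∃ (i : Fin q) (h : 0 < n i), x = Sum.inl i ∧ y = Sum.inr ⟨i, ⟨0, h⟩⟩) ∨
    (∃ (i : Fin q) (a b : Fin (n i)), x = Sum.inr ⟨i, a⟩ ∧ y = Sum.inr ⟨i, b⟩ ∧
      a.val + 1 = b.val))

/-- `G⁽¹⁾ = C₃S(n-3,0,0)`. -/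
noncomputable def Gmax1 (m : ℕ) := CqS 3 ![m, 0, 0]

/-- `G₍₂₎`: the cycle `C_{n-1}` with one pendent vertex attached. -/
noncomputable def Gmin2 (n : ℕ) := CqP (n - 1) (fun i => if i.val = 0 then 1 else 0)

section SWAux
open SimpleGraph

variable {V : Type u} (G : SimpleGraph V)

abbrev SWT (k : ℕ) (x y : V) :=
  { p : (Fin (k + 1) → V) × (Fin k → Sym2 V) //
    (∀ i : Fin k, p.2 i ∈ G.edgeSet ∧ p.1 i.castSucc ∈ p.2 i ∧ p.1 i.succ ∈ p.2 i) ∧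
    p.1 0 = x ∧ p.1 (Fin.last k) = y }

lemma swCount_def (k : ℕ) (x y : V) : swCount G k x y = Nat.card (SWT G k x y) := rfl

lemma swCount_zero [DecidableEq V] (x y : V) :
    swCount G 0 x y = if x = y then 1 else 0 := by
  rw [swCount_def]
  split_ifs with h
  · subst h
    have : Unique (SWT G 0 x x) := by
      refine ⟨⟨⟨(fun _ => x, Fin.elim0), fun i => i.elim0, rfl, rfl⟩⟩, ?_⟩
      rintro ⟨⟨f, g⟩, hc, h0, hl⟩
      have hf : f = fun _ => x := by
        funext i
        have : i = 0 := Fin.ext (by omega)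
        rw [this]; exact h0
      have hg : g = Fin.elim0 := funext fun i => i.elim0
      exact Subtype.ext (Prod.ext hf hg)
    exact Nat.card_unique
  · have : IsEmpty (SWT G 0 x y) := by
      refine ⟨?_⟩
      rintro ⟨⟨f, g⟩, hc, h0, hl⟩
      have h00 : (0 : Fin 1) = Fin.last 0 := Fin.ext (by simp)
      exact h (h0.symm.trans (h00 ▸ hl))
    exact Nat.card_of_isEmpty

private def revMap {k : ℕ} {x y : V} (p : SWT G k x y) : SWT G k y x := by
  refine ⟨(p.1.1 ∘ Fin.rev, p.1.2 ∘ Fin.rev), fun i => ?_, ?_, ?_⟩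
  · obtain ⟨he, h1, h2⟩ := p.2.1 i.rev
    refine ⟨he, ?_, ?_⟩
    · show p.1.1 (Fin.rev i.castSucc) ∈ p.1.2 i.rev
      rw [Fin.rev_castSucc]; exact h2
    · show p.1.1 (Fin.rev i.succ) ∈ p.1.2 i.rev
      rw [Fin.rev_succ]; exact h1
  · show p.1.1 (Fin.rev 0) = y
    rw [Fin.rev_zero]; exact p.2.2.2
  · show p.1.1 (Fin.rev (Fin.last k)) = x
    rw [Fin.rev_last]; exact p.2.2.1

lemma swCount_symm (k : ℕ) (x y : V) : swCount G k x y = swCount G k y x := by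
  rw [swCount_def, swCount_def]
  refine Nat.card_congr ⟨revMap G, revMap G, ?_, ?_⟩ <;>
  · rintro ⟨⟨f, g⟩, hp⟩
    apply Subtype.ext
    refine Prod.ext (funext fun i => ?_) (funext fun i => ?_) <;>
      simp [revMap, Fin.rev_rev]

private def peelMap {k : ℕ} {x y : V} (p : SWT G (k+1) x y) :
    Σ z : V, {e : Sym2 V // e ∈ G.edgeSet ∧ x ∈ e ∧ z ∈ e} × SWT G k z y :=
  ⟨p.1.1 1,
   ⟨p.1.2 0, by
      refine ⟨(p.2.1 0).1, ?_, ?_⟩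
      · have h := (p.2.1 0).2.1
        rwa [show (Fin.castSucc 0 : Fin (k+2)) = 0 from rfl, p.2.2.1] at h
      · have h := (p.2.1 0).2.2
        rwa [show (Fin.succ 0 : Fin (k+2)) = 1 from by ext; simp] at h⟩,
   ⟨(p.1.1 ∘ Fin.succ, p.1.2 ∘ Fin.succ), by
      refine ⟨fun i => ?_, rfl, ?_⟩
      · obtain ⟨he, h1, h2⟩ := p.2.1 i.succ
        refine ⟨he, ?_, h2⟩
        show p.1.1 (i.castSucc.succ) ∈ p.1.2 i.succ
        rw [Fin.succ_castSucc]; exact h1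
      · show p.1.1 (Fin.succ (Fin.last k)) = y
        rw [Fin.succ_last]; exact p.2.2.2⟩⟩

private def consMap {k : ℕ} {x y : V}
    (q : Σ z : V, {e : Sym2 V // e ∈ G.edgeSet ∧ x ∈ e ∧ z ∈ e} × SWT G k z y) :
    SWT G (k+1) x y :=
  ⟨(Fin.cons x q.2.2.1.1, Fin.cons q.2.1.1 q.2.2.1.2), by
    obtain ⟨z, ⟨e, he, hxe, hze⟩, ⟨⟨f, g⟩, hc, h0, hl⟩⟩ := q
    refine ⟨fun i => ?_, by simp, ?_⟩
    · refine Fin.cases ?_ (fun j => ?_) i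
      · refine ⟨by simpa using he, by simpa using hxe, ?_⟩
        show (Fin.cons x f : Fin (k+2) → V) (Fin.succ 0) ∈ (Fin.cons e g : Fin (k+1) → Sym2 V) 0
        rw [Fin.cons_succ, Fin.cons_zero, show f 0 = z from h0]; exact hze
      · obtain ⟨he', h1, h2⟩ := hc j
        refine ⟨by simpa using he', ?_, ?_⟩
        · show (Fin.cons x f : Fin (k+2) → V) (j.succ.castSucc) ∈
            (Fin.cons e g : Fin (k+1) → Sym2 V) j.succ
          rw [← Fin.succ_castSucc, Fin.cons_succ, Fin.cons_succ]; exact h1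
        · show (Fin.cons x f : Fin (k+2) → V) (j.succ.succ) ∈
            (Fin.cons e g : Fin (k+1) → Sym2 V) j.succ
          rw [Fin.cons_succ, Fin.cons_succ]; exact h2
    · show (Fin.cons x f : Fin (k+2) → V) (Fin.last (k+1)) = y
      rw [← Fin.succ_last, Fin.cons_succ]; exact hl⟩

private lemma consMap_peelMap {k : ℕ} {x y : V} (p : SWT G (k+1) x y) :
    consMap G (peelMap G p) = p := by
  obtain ⟨⟨f, g⟩, hc, h0, hl⟩ := p
  apply Subtype.ext
  refine Prod.ext (funext fun i => ?_) (funext fun i => ?_)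
  · refine Fin.cases ?_ (fun j => ?_) i
    · simpa [consMap, peelMap] using h0.symm
    · simp [consMap, peelMap]
  · refine Fin.cases ?_ (fun j => ?_) i <;> simp [consMap, peelMap]

private lemma consMap_injective {k : ℕ} {x y : V} :
    Function.Injective (consMap G (k := k) (x := x) (y := y)) := by
  rintro ⟨z1, ⟨e1, hp1⟩, ⟨⟨f1, g1⟩, hc1, h01, hl1⟩⟩ ⟨z2, ⟨e2, hp2⟩, ⟨⟨f2, g2⟩, hc2, h02, hl2⟩⟩ h
  have hv := congrArg Subtype.val h
  have hf : f1 = f2 := by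
    funext i
    have := congrFun (congrArg Prod.fst hv) i.succ
    simpa [consMap] using this
  have he : e1 = e2 := by
    have := congrFun (congrArg Prod.snd hv) 0
    simpa [consMap] using this
  have hg : g1 = g2 := by
    funext i
    have := congrFun (congrArg Prod.snd hv) i.succ
    simpa [consMap] using this
  subst hf he hg
  have hz1 : z1 = f1 0 := h01.symm
  have hz2 : z2 = f1 0 := h02.symm
  subst hz1 hz2
  rfl

private lemma card_peel (k : ℕ) (x y : V) :
    Nat.card (SWT G (k+1) x y) =
      Nat.card (Σ z : V, {e : Sym2 V // e ∈ G.edgeSet ∧ x ∈ e ∧ z ∈ e} × SWT G k z y) :=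
  (Nat.card_eq_of_bijective (consMap G)
    ⟨consMap_injective G, fun p => ⟨peelMap G p, consMap_peelMap G p⟩⟩).symm

private lemma card_edge_pair [Fintype V] [DecidableEq V] [DecidableRel G.Adj] (x z : V) :
    Nat.card {e : Sym2 V // e ∈ G.edgeSet ∧ x ∈ e ∧ z ∈ e} =
      if x = z then G.degree x else if G.Adj x z then 1 else 0 := by
  split_ifs with h1 h2
  · subst h1
    have : Nat.card {e : Sym2 V // e ∈ G.edgeSet ∧ x ∈ e ∧ x ∈ e}
        = Nat.card (G.incidenceSet x) := by
      apply Nat.card_congr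
      refine Equiv.subtypeEquivRight (fun e => ?_)
      constructor
      · rintro ⟨he, hx, -⟩; exact ⟨he, hx⟩
      · rintro ⟨he, hx⟩; exact ⟨he, hx, hx⟩
    rw [this, Nat.card_eq_fintype_card, G.card_incidenceSet_eq_degree]
  · have : Unique {e : Sym2 V // e ∈ G.edgeSet ∧ x ∈ e ∧ z ∈ e} := by
      refine ⟨⟨⟨s(x, z), G.mem_edgeSet.mpr h2, by simp, by simp⟩⟩, ?_⟩
      rintro ⟨e, he, hx, hz⟩
      exact Subtype.ext (Sym2.mem_and_mem_iff h1 |>.mp ⟨hx, hz⟩)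
    exact Nat.card_unique
  · have : IsEmpty {e : Sym2 V // e ∈ G.edgeSet ∧ x ∈ e ∧ z ∈ e} := by
      refine ⟨?_⟩
      rintro ⟨e, he, hx, hz⟩
      exact h2 (G.mem_edgeSet.mp ((Sym2.mem_and_mem_iff h1 |>.mp ⟨hx, hz⟩) ▸ he))
    exact Nat.card_of_isEmpty

private lemma card_sigma_prod [Fintype V] (A B : V → Type*)
    [∀ z, Finite (A z)] [∀ z, Finite (B z)] :
    Nat.card (Σ z : V, A z × B z) = ∑ z : V, Nat.card (A z) * Nat.card (B z) := by
  classical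
  haveI : ∀ z, Fintype (A z) := fun z => Fintype.ofFinite _
  haveI : ∀ z, Fintype (B z) := fun z => Fintype.ofFinite _
  rw [Nat.card_eq_fintype_card, Fintype.card_sigma]
  exact Finset.sum_congr rfl fun z _ => by
    rw [Fintype.card_prod, Nat.card_eq_fintype_card, Nat.card_eq_fintype_card]

private lemma sum_deg_split [Fintype V] [DecidableEq V] [DecidableRel G.Adj]
    (y : V) (a : V → ℕ) :
    ∑ z : V, (if y = z then G.degree y else if G.Adj y z then 1 else 0) * a z
      = G.degree y * a y + ∑ z ∈ G.neighborFinset y, a z := by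
  rw [← Finset.add_sum_erase Finset.univ _ (Finset.mem_univ y)]
  rw [if_pos rfl]
  congr 1
  have h1 : ∀ z ∈ Finset.univ.erase y,
      (if y = z then G.degree y else if G.Adj y z then 1 else 0) * a z
        = if G.Adj y z then a z else 0 := by
    intro z hz
    rw [if_neg (fun h => Finset.ne_of_mem_erase hz h.symm)]
    split_ifs <;> simp
  rw [Finset.sum_congr rfl h1, ← Finset.sum_filter]
  congr 1
  ext z
  simp only [Finset.mem_filter, Finset.mem_erase, Finset.mem_univ, true_and,
    SimpleGraph.mem_neighborFinset]
  constructor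
  · rintro ⟨-, h⟩; exact h
  · intro h
    have hne : z ≠ y := fun hzy => G.irrefl (by rwa [hzy] at h)
    exact ⟨⟨hne, trivial⟩, h⟩

lemma swCount_succ [Fintype V] [DecidableEq V] [DecidableRel G.Adj] (k : ℕ) (x y : V) :
    swCount G (k + 1) x y
      = G.degree y * swCount G k x y + ∑ z ∈ G.neighborFinset y, swCount G k x z := by
  rw [swCount_symm, swCount_def, card_peel, card_sigma_prod]
  have : ∀ z : V, Nat.card {e : Sym2 V // e ∈ G.edgeSet ∧ y ∈ e ∧ z ∈ e} *
      Nat.card (SWT G k z x)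
        = (if y = z then G.degree y else if G.Adj y z then 1 else 0) * swCount G k x z := by
    intro z
    rw [card_edge_pair, ← swCount_def, swCount_symm]
  rw [Finset.sum_congr rfl fun z _ => this z, sum_deg_split]

lemma getVert_mem_support {u v : V} {G : SimpleGraph V} (p : G.Walk u v) (i : ℕ) :
    p.getVert i ∈ p.support := by
  induction p generalizing i with
  | nil => cases i <;> simp [SimpleGraph.Walk.getVert]
  | cons h q ih =>
    cases i with
    | zero => simp [SimpleGraph.Walk.getVert]
    | succ n =>
      rw [SimpleGraph.Walk.getVert_cons_succ]
      simp only [SimpleGraph.Walk.support_cons, List.mem_cons]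
      exact Or.inr (ih n)

lemma IsPath.getVert_inj' {u v : V} {G : SimpleGraph V} {p : G.Walk u v} (hp : p.IsPath) :
    ∀ i j : ℕ, i ≤ p.length → j ≤ p.length → p.getVert i = p.getVert j → i = j := by
  induction p with
  | nil => intro i j hi hj _; simp at hi hj; omega
  | cons h q ih =>
    rw [SimpleGraph.Walk.cons_isPath_iff] at hp
    intro i j hi hj hij
    match i, j with
    | 0, 0 => rfl
    | 0, (n+1) =>
      exfalso
      rw [SimpleGraph.Walk.getVert_zero, SimpleGraph.Walk.getVert_cons_succ] at hij
      exact hp.2 (hij ▸ getVert_mem_support q n)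
    | (n+1), 0 =>
      exfalso
      rw [SimpleGraph.Walk.getVert_zero, SimpleGraph.Walk.getVert_cons_succ] at hij
      exact hp.2 (hij ▸ getVert_mem_support q n)
    | (n+1), (m+1) =>
      rw [SimpleGraph.Walk.getVert_cons_succ, SimpleGraph.Walk.getVert_cons_succ] at hij
      simp only [SimpleGraph.Walk.length_cons] at hi hj
      have := ih hp.1 n m (by omega) (by omega) hij
      omega

end SWAux

/-- Along a pendent path, for every vertex `w` outside the initial segment
`{v₀,…,v_a}` (with `a = ⌊(r+s)/2⌋`), the semi-edge walks from `w` to `v_r` are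
dominated by those from `w` to `v_s`. -/
theorem swCount_to_le_of_path {V : Type*} [Fintype V] [DecidableEq V]
    (G : SimpleGraph V) [DecidableRel G.Adj]
    {x y : V} (p : G.Walk x y) (hp : p.IsPath) {l : ℕ} (hl : p.length = l)
    (hdeg0 : G.degree x = 1)
    (r s : ℕ) (hrs : r < s) (hsum : r + s ≤ l - 1)
    (hdeg : ∀ i : ℕ, 0 < i → 2 * i < r + s → G.degree (p.getVert i) = 2) :
    ∀ w : V, (¬ ∃ i : ℕ, i ≤ (r + s) / 2 ∧ w = p.getVert i) →
      ∀ k : ℕ, swCount G k w (p.getVert r) ≤ swCount G k w (p.getVert s) := by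
  intro w hw k
  have hl2 : r + s + 1 ≤ l := by omega
  have hinj := IsPath.getVert_inj' hp
  have hadj : ∀ i, i < l → G.Adj (p.getVert i) (p.getVert (i + 1)) := fun i hi =>
    p.adj_getVert_succ (by rw [hl]; exact hi)
  -- neighbors of the start vertex
  have hN0 : G.neighborFinset x = {p.getVert 1} := by
    have h1 : p.getVert 1 ∈ G.neighborFinset x := by
      rw [SimpleGraph.mem_neighborFinset]
      have := hadj 0 (by omega)
      rwa [p.getVert_zero] at this
    refine (Finset.eq_of_subset_of_card_le (Finset.singleton_subset_iff.mpr h1) ?_).symm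
    rw [SimpleGraph.card_neighborFinset_eq_degree, hdeg0, Finset.card_singleton]
  -- neighbors of interior vertices of small index
  have hNadj : ∀ j, 0 < j → j < l →
      G.Adj (p.getVert j) (p.getVert (j - 1)) ∧ G.Adj (p.getVert j) (p.getVert (j + 1)) ∧
        p.getVert (j - 1) ≠ p.getVert (j + 1) := by
    intro j h0 hjl
    refine ⟨?_, hadj j hjl, ?_⟩
    · have := hadj (j - 1) (by omega)
      rw [show j - 1 + 1 = j from by omega] at this
      exact this.symm
    · intro h
      have := hinj (j - 1) (j + 1) (by omega) (by omega) h
      omega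
  have hNi : ∀ i, 0 < i → 2 * i < r + s →
      G.neighborFinset (p.getVert i) = {p.getVert (i - 1), p.getVert (i + 1)} := by
    intro i h0 h2
    obtain ⟨ha1, ha2, hne⟩ := hNadj i h0 (by omega)
    refine (Finset.eq_of_subset_of_card_le ?_ ?_).symm
    · intro z hz
      simp only [Finset.mem_insert, Finset.mem_singleton] at hz
      rw [SimpleGraph.mem_neighborFinset]
      rcases hz with h | h
      · exact h ▸ ha1
      · exact h ▸ ha2
    · rw [SimpleGraph.card_neighborFinset_eq_degree, hdeg i h0 h2,
        Finset.card_insert_of_notMem (by simpa using hne), Finset.card_singleton]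
  -- lower bound on the recurrence for any interior vertex
  have hRHS : ∀ k j, 0 < j → j < l →
      2 * swCount G k w (p.getVert j) +
        (swCount G k w (p.getVert (j - 1)) + swCount G k w (p.getVert (j + 1)))
        ≤ swCount G (k + 1) w (p.getVert j) := by
    intro k j h0 hjl
    obtain ⟨ha1, ha2, hne⟩ := hNadj j h0 hjl
    rw [swCount_succ]
    have hsub : {p.getVert (j - 1), p.getVert (j + 1)} ⊆ G.neighborFinset (p.getVert j) := by
      intro z hz
      simp only [Finset.mem_insert, Finset.mem_singleton] at hz
      rw [SimpleGraph.mem_neighborFinset]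
      rcases hz with h | h
      · exact h ▸ ha1
      · exact h ▸ ha2
    have hcard : 2 ≤ G.degree (p.getVert j) := by
      rw [← SimpleGraph.card_neighborFinset_eq_degree]
      calc 2 = ({p.getVert (j - 1), p.getVert (j + 1)} : Finset V).card := by
              rw [Finset.card_insert_of_notMem (by simpa using hne), Finset.card_singleton]
        _ ≤ _ := Finset.card_le_card hsub
    have hsum2 : swCount G k w (p.getVert (j - 1)) + swCount G k w (p.getVert (j + 1))
        ≤ ∑ z ∈ G.neighborFinset (p.getVert j), swCount G k w z := by
      rw [← Finset.sum_pair hne]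
      exact Finset.sum_le_sum_of_subset hsub
    exact Nat.add_le_add (Nat.mul_le_mul_right _ hcard) hsum2
  -- exact recurrence for interior vertices with known degree 2
  have hLi : ∀ k i, 0 < i → 2 * i < r + s →
      swCount G (k + 1) w (p.getVert i)
        = 2 * swCount G k w (p.getVert i) +
          (swCount G k w (p.getVert (i - 1)) + swCount G k w (p.getVert (i + 1))) := by
    intro k i h0 h2
    obtain ⟨-, -, hne⟩ := hNadj i h0 (by omega)
    rw [swCount_succ, hdeg i h0 h2, hNi i h0 h2, Finset.sum_pair hne]
  -- exact recurrence for the start vertex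
  have hL0 : ∀ k, swCount G (k + 1) w (p.getVert 0)
      = swCount G k w (p.getVert 0) + swCount G k w (p.getVert 1) := by
    intro k
    rw [p.getVert_zero, swCount_succ, hdeg0, hN0, Finset.sum_singleton, one_mul]
  -- the key monotonicity claim
  have key : ∀ k : ℕ, ∀ i j : ℕ, i < j → i + j ≤ r + s →
      swCount G k w (p.getVert i) ≤ swCount G k w (p.getVert j) := by
    intro k
    induction k with
    | zero =>
      intro i j hij hijm
      rw [swCount_zero, swCount_zero]
      have hwi : ¬ (w = p.getVert i) := fun h => hw ⟨i, by omega, h⟩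
      rw [if_neg hwi]
      exact Nat.zero_le _
    | succ k ih =>
      intro i j hij hijm
      have hj0 : 0 < j := by omega
      have hjl : j < l := by omega
      have hR := hRHS k j hj0 hjl
      rcases Nat.eq_zero_or_pos i with hi0 | hi0
      · subst hi0
        rw [hL0 k]
        rcases Nat.lt_or_ge j 2 with hj1 | hj2
        · -- j = 1
          have hj1' : j = 1 := by omega
          subst hj1'
          have h01 : swCount G k w (p.getVert 0) ≤ swCount G k w (p.getVert 1) :=
            ih 0 1 (by omega) (by omega)
          simp only [show (1 : ℕ) - 1 = 0 from rfl] at hR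
          omega
        · -- j ≥ 2
          have h0j : swCount G k w (p.getVert 0) ≤ swCount G k w (p.getVert j) :=
            ih 0 j (by omega) (by omega)
          have h1j : swCount G k w (p.getVert 1) ≤ swCount G k w (p.getVert (j - 1)) := by
            rcases Nat.lt_or_ge 1 (j - 1) with h | h
            · exact ih 1 (j - 1) h (by omega)
            · have : j - 1 = 1 := by omega
              rw [this]
          omega
      · -- i ≥ 1
        rw [hLi k i hi0 (by omega)]
        rcases Nat.lt_or_ge (i + 1) j with hj2 | hj2
        · -- j ≥ i + 2
          have h1 : swCount G k w (p.getVert i) ≤ swCount G k w (p.getVert j) :=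
            ih i j hij hijm
          have h2 : swCount G k w (p.getVert (i - 1)) ≤ swCount G k w (p.getVert (j + 1)) :=
            ih (i - 1) (j + 1) (by omega) (by omega)
          have h3 : swCount G k w (p.getVert (i + 1)) ≤ swCount G k w (p.getVert (j - 1)) := by
            rcases Nat.lt_or_ge (i + 1) (j - 1) with h | h
            · exact ih (i + 1) (j - 1) h (by omega)
            · have : j - 1 = i + 1 := by omega
              rw [this]
          omega
        · -- j = i + 1
          have hj1 : j = i + 1 := by omega
          subst hj1
          have h1 : swCount G k w (p.getVert i) ≤ swCount G k w (p.getVert (i + 1)) :=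
            ih i (i + 1) (by omega) (by omega)
          have h2 : swCount G k w (p.getVert (i - 1)) ≤ swCount G k w (p.getVert (i + 2)) :=
            ih (i - 1) (i + 2) (by omega) (by omega)
          have he1 : i + 1 - 1 = i := by omega
          rw [he1] at hR
          have he2 : i + 1 + 1 = i + 2 := by omega
          rw [he2] at hR
          omega
  exact key k r s hrs (le_refl _)
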